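/- Let n ≥ 1 be odd. The discrete cosine transform matrix C_n, which is the ((n+1)/2)×((n+1)/2) matrix with rows and columns indexed by 0,1,…,(n−1)/2 whose (r,s)-entry equals √(1/n) if r = s = 0, equals √(2/n) if exactly one of r, s is 0, and equals 2cos(2πrs/n)/√n otherwise, has the nonvanishing minors property if and only if n is prime or n = 1. -/

import Mathlib

/-!
For prime `p`, a minor of `C_p` is, up to nonzero diagonal factors, a minor of
`(cos (2π u v / p))`. A relation `∑ⱼ cⱼ cos (2π uᵢ vⱼ / p) = 0` says that
`μ = ∑ⱼ cⱼ (δ_{vⱼ} + δ_{-vⱼ})` on `ℤ/p` has Fourier transform vanishing on `{±uᵢ}`, while `μ` is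
supported on `{±vⱼ}`. After transposing if necessary, the support is no larger than the zero set,
so Chebotarev's theorem (every square minor of `(ζ ^ (a b))` is nonzero) forces `μ = 0`.

Chebotarev's theorem is proved following Frenkel. In `ℤ[ζ]`, divide a kernel vector by the
largest power of `ζ - 1` dividing all its entries. The corresponding polynomial with `k` monomials
vanishes at `k` distinct powers of `ζ`, so modulo `ζ - 1` it is divisible by `(X - 1) ^ k`. Over a
domain, a polynomial with `k` monomials whose exponents stay distinct in the domain and which is
divisible by `(X - 1) ^ k` is zero, contradicting the choice of the power of `ζ - 1`.

For composite odd `n = a b` with `a, b ≥ 3`, rows `1` and `1 + b` of `C_n` agree on columns `0`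
and `a`.
-/

open Real Polynomial Finset Matrix
open scoped Pointwise

section Frenkel

variable {R : Type*} [CommRing R]

theorem Polynomial.X_mul_derivative_C_mul_X_pow (c : R) (m : ℕ) :
    X * derivative (C c * X ^ m) = C (c * m) * X ^ m := by
  rcases m with _ | m
  · simp
  · rw [derivative_C_mul_X_pow, C_mul, mul_left_comm, ← pow_succ']
    simp [mul_assoc]

theorem Polynomial.eq_zero_of_X_sub_one_pow_dvd_sum [IsDomain R] {ι : Type*} [DecidableEq ι]
    (s : Finset ι) (g : ι → ℕ) (c : ι → R) (hg : Set.InjOn (fun j ↦ (g j : R)) s)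
    (hdvd : (X - 1) ^ #s ∣ ∑ j ∈ s, C (c j) * X ^ g j) : ∀ j ∈ s, c j = 0 := by
  induction s using Finset.induction_on generalizing c with
  | empty => simp
  | insert j₀ s hj₀ ih =>
    rw [card_insert_of_notMem hj₀] at hdvd
    -- `X d/dX - g j₀` kills the `j₀` term and rescales the others by `g j - g j₀ ≠ 0`
    have hkill : X * derivative (∑ j ∈ insert j₀ s, C (c j) * X ^ g j)
          - C (g j₀ : R) * ∑ j ∈ insert j₀ s, C (c j) * X ^ g j =
        ∑ j ∈ s, C (c j * (g j - g j₀)) * X ^ g j := by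
      rw [← sum_insert_zero (a := j₀) (f := fun j ↦ C (c j * (g j - g j₀)) * X ^ g j)
        (by simp)]
      simp only [derivative_sum, mul_sum, ← sum_sub_distrib, X_mul_derivative_C_mul_X_pow]
      refine sum_congr rfl fun j _ ↦ ?_
      simp only [mul_sub, C_sub, C_mul]
      ring
    have hs : ∀ j ∈ s, c j = 0 := by
      refine fun j hj ↦ (mul_eq_zero.mp (ih (fun j ↦ c j * (g j - g j₀))
        (hg.mono (subset_insert _ _)) ?_ j hj)).resolve_right ?_
      · rw [← hkill]
        refine dvd_sub (dvd_mul_of_dvd_right ?_ _) (dvd_mul_of_dvd_right ?_ _)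
        · simpa using pow_sub_one_dvd_derivative_of_pow_dvd hdvd
        · exact (pow_dvd_pow _ s.card.le_succ).trans hdvd
      · exact sub_ne_zero.mpr fun h ↦
          hj₀ (hg (mem_insert_of_mem hj) (mem_insert_self _ _) h ▸ hj)
    have hroot : (∑ j ∈ insert j₀ s, C (c j) * X ^ g j).eval 1 = 0 := by
      obtain ⟨q, hq⟩ := (dvd_pow_self _ s.card.succ_ne_zero).trans hdvd
      simp [hq]
    rw [sum_insert hj₀, sum_eq_zero fun j hj ↦ by rw [hs j hj, C_0, zero_mul]] at hroot
    intro j hj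
    rcases mem_insert.mp hj with rfl | hj
    · simpa using hroot
    · exact hs j hj

theorem Polynomial.prod_X_sub_C_dvd_of_eval_eq_zero [IsDomain R] {ι : Type*} [Fintype ι]
    {r : ι → R} (hr : Function.Injective r) {f : R[X]} (hf : ∀ i, f.eval (r i) = 0) :
    ∏ i, (X - C (r i)) ∣ f := by
  rcases eq_or_ne f 0 with rfl | hf0
  · exact dvd_zero _
  have hnodup : (univ.val.map r).Nodup := univ.nodup.map hr
  have := (Multiset.prod_X_sub_C_dvd_iff_le_roots hf0 (univ.val.map r)).mpr
    ((Multiset.le_iff_subset hnodup).mpr fun x hx ↦ ?_)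
  · simpa [Multiset.map_map] using this
  obtain ⟨i, -, rfl⟩ := Multiset.mem_map.mp hx
  exact (mem_roots hf0).mpr (hf i)

end Frenkel

theorem exists_eq_pow_smul_and_not_dvd {R ι : Type*} [CommMonoidWithZero R] [WfDvdMonoid R]
    {x : R} (hx : ¬IsUnit x) {v : ι → R} {j₀ : ι} (hv : v j₀ ≠ 0) :
    ∃ (n : ℕ) (w : ι → R), v = x ^ n • w ∧ ∃ j, ¬x ∣ w j := by
  obtain ⟨a, ⟨n, w, hvw, rfl⟩, hmin⟩ := wellFounded_dvdNotUnit.has_min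
    {a | ∃ (n : ℕ) (w : ι → R), v = x ^ n • w ∧ w j₀ = a} ⟨v j₀, 0, v, by simp, rfl⟩
  refine ⟨n, w, hvw, ?_⟩
  by_contra! hall
  choose u hu using hall
  have hvu : v = x ^ (n + 1) • u := by
    ext j
    simp [hvw, hu j, pow_succ, mul_assoc]
  refine hmin (u j₀) ⟨n + 1, u, hvu, rfl⟩ ⟨fun h ↦ hv ?_, x, hx, by rw [hu j₀, mul_comm]⟩
  simp [hvu, h]

theorem det_pow_mul_ne_zero_of_ker_le {S F ι : Type*} [CommRing S] [IsDomain S]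
    [WfDvdMonoid S] [CommRing F] [IsDomain F] [Fintype ι] [DecidableEq ι] (φ : S →+* F) {ρ : S}
    (hρ : ρ ≠ 1)
    (hφρ : φ ρ = 1) (hker : RingHom.ker φ ≤ Ideal.span {ρ - 1}) {a b : ι → ℕ}
    (ha : Function.Injective fun i ↦ ρ ^ a i) (hb : Function.Injective fun j ↦ (b j : F)) :
    (Matrix.of fun i j ↦ ρ ^ (a i * b j)).det ≠ 0 := by
  intro hdet
  have hπ : ¬IsUnit (ρ - 1) := fun h ↦ by simpa [hφρ] using h.map φ
  obtain ⟨v, hv0, hv⟩ := Matrix.exists_mulVec_eq_zero_iff.mpr hdet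
  obtain ⟨j₀, hj₀⟩ := Function.ne_iff.mp hv0
  obtain ⟨n, w, rfl, j₁, hj₁⟩ := exists_eq_pow_smul_and_not_dvd hπ hj₀
  rw [Matrix.mulVec_smul, smul_eq_zero] at hv
  have hw := hv.resolve_left (pow_ne_zero _ (sub_ne_zero.mpr hρ))
  have hdvd : ∏ i, (X - C (ρ ^ a i)) ∣ ∑ j, C (w j) * X ^ b j :=
    prod_X_sub_C_dvd_of_eval_eq_zero ha fun i ↦ by
      have := congrFun hw i
      simp only [Matrix.mulVec, dotProduct, Matrix.of_apply, Pi.zero_apply] at this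
      simp only [eval_finsetSum, eval_mul, eval_C, eval_pow, eval_X, ← pow_mul, ← this]
      exact sum_congr rfl fun j _ ↦ mul_comm _ _
  have hdvd' : (X - 1) ^ #(univ : Finset ι) ∣ ∑ j, C (φ (w j)) * X ^ b j := by
    simpa [Polynomial.map_prod, Polynomial.map_sum, hφρ] using Polynomial.map_dvd φ hdvd
  exact hj₁ <| Ideal.mem_span_singleton.mp <| hker <|
    eq_zero_of_X_sub_one_pow_dvd_sum univ b (φ ∘ w) hb.injOn hdvd' j₁ (mem_univ _)

theorem AdjoinRoot.root_sub_one_dvd_of_map_eq_zero {f : ℤ[X]} {n : ℕ} (hf : f.eval 1 = n)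
    (φ : AdjoinRoot f →+* ZMod n) (hφ : φ (root f) = 1) {x : AdjoinRoot f} (hx : φ x = 0) :
    root f - 1 ∣ x := by
  have hcong (g : ℤ[X]) : root f - 1 ∣ mk f g - ((g.eval 1 : ℤ) : AdjoinRoot f) := by
    have := map_dvd (mk f) (X_sub_C_dvd_sub_C_eval (p := g) (a := 1))
    rwa [map_sub, map_sub, mk_X, mk_C, mk_C, map_one, ← Int.cast_one] at this
  obtain ⟨g, rfl⟩ := mk_surjective x
  obtain ⟨y, hy⟩ := hcong g
  have hφg : φ (mk f g) = ((g.eval 1 : ℤ) : ZMod n) := by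
    rw [← sub_add_cancel (mk f g) ((g.eval 1 : ℤ) : AdjoinRoot f), hy]
    simp [hφ]
  obtain ⟨t, ht⟩ := (ZMod.intCast_zmod_eq_zero_iff_dvd _ _).mp (hφg ▸ hx)
  have hn : root f - 1 ∣ ((n : ℤ) : AdjoinRoot f) := by
    simpa [hf] using hcong f
  rw [← sub_add_cancel (mk f g) ((g.eval 1 : ℤ) : AdjoinRoot f), hy, ht, Int.cast_mul]
  exact dvd_add (dvd_mul_right _ _) (dvd_mul_of_dvd_left hn _)

theorem IsPrimitiveRoot.det_pow_val_mul_ne_zero {K ι : Type*} [Field K] [CharZero K]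
    [Fintype ι] [DecidableEq ι] {p : ℕ} [hp : Fact p.Prime] {η : K} (hη : IsPrimitiveRoot η p)
    {a b : ι → ZMod p} (ha : Function.Injective a) (hb : Function.Injective b) :
    (Matrix.of fun i j ↦ η ^ (a i * b j).val).det ≠ 0 := by
  have hint : IsIntegral ℤ η := hη.isIntegral hp.out.pos
  have hf : (minpoly ℤ η).eval 1 = p := by
    rw [← cyclotomic_eq_minpoly hη hp.out.pos, eval_one_cyclotomic_prime]
  let θ : AdjoinRoot (minpoly ℤ η) →+* K :=
    (Algebra.adjoin ℤ {η}).val.toRingHom.comp (AdjoinRoot.Minpoly.toAdjoin ℤ η).toRingHom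
  have hθ : Function.Injective θ :=
    Subtype.val_injective.comp (minpoly.ToAdjoin.injective hint)
  have hθρ : θ (AdjoinRoot.root (minpoly ℤ η)) = η :=
    AdjoinRoot.mk_X (f := minpoly ℤ η) ▸ AdjoinRoot.Minpoly.coe_toAdjoin_mk_X
  have := hθ.isDomain θ
  let φ : AdjoinRoot (minpoly ℤ η) →+* ZMod p :=
    AdjoinRoot.lift (Int.castRingHom _) 1 (by simp [eval₂_at_one, hf])
  have hφρ : φ (AdjoinRoot.root (minpoly ℤ η)) = 1 := AdjoinRoot.lift_root _
  have hentry (c d : ZMod p) :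
      η ^ (c * d).val = θ (AdjoinRoot.root (minpoly ℤ η) ^ (c.val * d.val)) := by
    have h := pow_mod_orderOf η (c.val * d.val)
    rw [← hη.eq_orderOf] at h
    rw [map_pow, hθρ, ZMod.val_mul, h]
  have hρ : AdjoinRoot.root (minpoly ℤ η) ≠ 1 := fun h ↦
    hη.ne_one hp.out.one_lt (by rw [← hθρ, h, map_one])
  have ha' : Function.Injective fun i ↦ AdjoinRoot.root (minpoly ℤ η) ^ (a i).val := by
    intro i i' h
    have := congrArg θ h
    simp only [map_pow, hθρ] at this
    exact ha (ZMod.val_injective p (hη.pow_inj (ZMod.val_lt _) (ZMod.val_lt _) this))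
  have hb' : Function.Injective fun j ↦ ((b j).val : ZMod p) := by simpa using hb
  have hker : RingHom.ker φ ≤ Ideal.span {AdjoinRoot.root (minpoly ℤ η) - 1} := fun _ hx ↦
    Ideal.mem_span_singleton.mpr (AdjoinRoot.root_sub_one_dvd_of_map_eq_zero hf φ hφρ hx)
  have hdet := det_pow_mul_ne_zero_of_ker_le φ hρ hφρ hker ha' hb'
  simp only [hentry]
  have hmap := RingHom.map_det θ (Matrix.of fun i j ↦
    AdjoinRoot.root (minpoly ℤ η) ^ ((a i).val * (b j).val))
  exact hmap ▸ (map_ne_zero_iff θ hθ).mpr hdet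

theorem IsPrimitiveRoot.eq_zero_of_card_le_of_fourier_eq_zero {K : Type*} [Field K] [CharZero K]
    {p : ℕ} [Fact p.Prime] {η : K} (hη : IsPrimitiveRoot η p) {μ : ZMod p → K}
    {T B : Finset (ZMod p)} (hT : ∀ x ∉ T, μ x = 0) (hcard : #T ≤ #B)
    (hB : ∀ b ∈ B, ∑ x, μ x * η ^ (x * b).val = 0) : μ = 0 := by
  obtain ⟨B', hB', hcard'⟩ := exists_subset_card_eq hcard
  let e : T ≃ B' := Fintype.equivOfCardEq (by simp [hcard'])
  have hdet := hη.det_pow_val_mul_ne_zero (a := fun x : T ↦ (x : ZMod p))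
    (b := fun y ↦ (e y : ZMod p)) Subtype.val_injective (Subtype.val_injective.comp e.injective)
  have hν : (fun x : T ↦ μ x) ᵥ*
      Matrix.of (fun x y : T ↦ η ^ ((x : ZMod p) * e y).val) = 0 := by
    ext y
    simp only [Matrix.vecMul, dotProduct, Matrix.of_apply, Pi.zero_apply]
    rw [sum_coe_sort T (fun x ↦ μ x * η ^ (x * e y).val),
      sum_subset (subset_univ T) fun x _ hx ↦ by rw [hT x hx, zero_mul]]
    exact hB _ (hB' (e y).2)
  by_contra hμ
  obtain ⟨x, hx⟩ := Function.ne_iff.mp hμ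
  have hxT : x ∈ T := by_contra fun h ↦ hx (hT x h)
  exact hdet (exists_vecMul_eq_zero_iff.mp ⟨_, Function.ne_iff.mpr ⟨⟨x, hxT⟩, by simpa⟩, hν⟩)

section EvenDiracSum

variable {G R ι : Type*} [AddGroup G] [DecidableEq G] [CommRing R] [Fintype ι]

def evenDiracSum (s : ι → G) (c : ι → R) (x : G) : R :=
  ∑ j, c j * ((if s j = x then 1 else 0) + (if -s j = x then 1 else 0))

theorem sum_evenDiracSum_mul [Fintype G] (s : ι → G) (c : ι → R) (g : G → R) :
    ∑ x, evenDiracSum s c x * g x = ∑ j, c j * (g (s j) + g (-s j)) := by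
  simp only [evenDiracSum, sum_mul, mul_assoc, add_mul, ite_mul, one_mul, zero_mul]
  rw [sum_comm]
  simp [sum_add_distrib, mul_add]

theorem evenDiracSum_eq_zero_of_notMem (s : ι → G) (c : ι → R) {x : G}
    (hx : x ∉ univ.image s ∪ -univ.image s) : evenDiracSum s c x = 0 := by
  refine sum_eq_zero fun j _ ↦ ?_
  have h₁ : s j ≠ x := fun h ↦ hx (mem_union_left _ (mem_image.mpr ⟨j, mem_univ _, h⟩))
  have h₂ : -s j ≠ x := fun h ↦ hx (mem_union_right _ (Finset.mem_neg.mpr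
    ⟨s j, mem_image_of_mem _ (mem_univ j), h⟩))
  simp [h₁, h₂]

theorem evenDiracSum_apply_self [DecidableEq ι] {s : ι → G} (hs : Function.Injective s)
    (hneg : ∀ j j', s j = -s j' → j = j') (c : ι → R) (j : ι) :
    evenDiracSum s c (s j) = c j * (1 + if -s j = s j then 1 else 0) := by
  rw [evenDiracSum, sum_eq_single j]
  · simp
  · intro j' _ hj'
    have h₁ : s j' ≠ s j := hs.ne hj'
    have h₂ : -s j' ≠ s j := fun h ↦ hj' (hneg j j' h.symm).symm
    simp [h₁, h₂]
  · simp

end EvenDiracSum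

section HalfRange

variable {p : ℕ}

theorem ZMod.eq_zero_of_natCast_eq_neg {u v : ℕ} (hu : 2 * u < p) (hv : 2 * v < p)
    (h : (u : ZMod p) = -v) : u = 0 ∧ v = 0 := by
  have hdvd : p ∣ u + v :=
    (ZMod.natCast_eq_zero_iff _ _).mp (by rw [Nat.cast_add, h, neg_add_cancel])
  have := Nat.eq_zero_of_dvd_of_lt hdvd (by omega)
  omega

theorem ZMod.injective_natCast_comp {ι : Type*} {w : ι → ℕ} (hw : Function.Injective w)
    (hlt : ∀ i, w i < p) : Function.Injective fun i ↦ (w i : ZMod p) := fun i j h ↦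
  hw (by simpa [ZMod.natCast_eq_natCast_iff', Nat.mod_eq_of_lt (hlt _)] using h)

theorem ZMod.card_image_natCast_union_neg {ι : Type*} [Fintype ι] {w : ι → ℕ}
    (hw : Function.Injective w) (hw₂ : ∀ i, 2 * w i < p) :
    #(univ.image (fun i ↦ (w i : ZMod p)) ∪ -univ.image (fun i ↦ (w i : ZMod p))) +
      (if ∃ i, w i = 0 then 1 else 0) = 2 * Fintype.card ι := by
  set S := univ.image fun i ↦ (w i : ZMod p)
  have hS : #S = Fintype.card ι :=
    card_image_of_injective _ (injective_natCast_comp hw fun i ↦ by linarith [hw₂ i])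
  have hsub : S ∩ -S ⊆ {0} := by
    intro x hx
    simp only [S, mem_inter, mem_image, mem_univ, true_and, Finset.mem_neg] at hx
    obtain ⟨⟨i, rfl⟩, y, ⟨j, rfl⟩, hj⟩ := hx
    simp [(eq_zero_of_natCast_eq_neg (hw₂ i) (hw₂ j) hj.symm).1]
  have hinter : #(S ∩ -S) = if ∃ i, w i = 0 then 1 else 0 := by
    split_ifs with h0
    · obtain ⟨i, hi⟩ := h0
      have h0S : (0 : ZMod p) ∈ S := mem_image.mpr ⟨i, mem_univ _, by simp [hi]⟩
      rw [Subset.antisymm hsub (by simpa [Finset.mem_neg] using h0S), card_singleton]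
    · refine card_eq_zero.mpr (eq_empty_of_forall_notMem fun x hx ↦ h0 ?_)
      obtain rfl := mem_singleton.mp (hsub hx)
      obtain ⟨i, -, hi⟩ := mem_image.mp (mem_inter.mp hx).1
      have hdvd := (ZMod.natCast_eq_zero_iff _ _).mp hi
      exact ⟨i, Nat.eq_zero_of_dvd_of_lt hdvd (by linarith [hw₂ i])⟩
  rw [← hinter, card_union_add_card_inter, Finset.card_neg, hS, two_mul]

end HalfRange

theorem Complex.exp_pow_val_add_exp_pow_neg_val (p N : ℕ) [NeZero p] :
    Complex.exp (2 * π * Complex.I / p) ^ (N : ZMod p).val +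
      Complex.exp (2 * π * Complex.I / p) ^ (-(N : ZMod p)).val =
      (2 * Real.cos (2 * π * N / p) : ℝ) := by
  have h (j : ℤ) : Complex.exp (2 * π * Complex.I / p) ^ (j : ZMod p).val =
      Complex.exp (2 * π * Complex.I * j / p) := by
    rw [← ZMod.stdAddChar_coe, ZMod.stdAddChar_apply, ZMod.toCircle_apply, ← Complex.exp_nat_mul]
    congr 1
    ring
  have h₁ := h N
  have h₂ := h (-N)
  push_cast at h₁ h₂
  rw [h₁, h₂, Complex.ofReal_mul, Complex.ofReal_cos, Complex.ofReal_ofNat, Complex.two_cos]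
  push_cast
  congr 1 <;> congr 1 <;> ring

theorem sum_evenDiracSum_mul_exp_pow_val {ι : Type*} [Fintype ι] (p : ℕ) [NeZero p] (u : ℕ)
    (v : ι → ℕ) (c : ι → ℝ) {b : ZMod p} (hb : b = u ∨ b = -u) :
    ∑ x, evenDiracSum (fun j ↦ (v j : ZMod p)) (fun j ↦ (c j : ℂ)) x *
        Complex.exp (2 * π * Complex.I / p) ^ (x * b).val =
      (2 * ∑ j, Real.cos (2 * π * (u * v j : ℕ) / p) * c j : ℝ) := by
  rw [sum_evenDiracSum_mul, mul_sum]
  push_cast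
  refine sum_congr rfl fun j _ ↦ ?_
  have e : (v j : ZMod p) * u = ((u * v j : ℕ) : ZMod p) := by push_cast; ring
  have hpair := Complex.exp_pow_val_add_exp_pow_neg_val p (u * v j)
  rcases hb with rfl | rfl
  · rw [neg_mul, e, hpair]
    push_cast
    ring
  · rw [neg_mul, mul_neg, neg_neg, e, add_comm, hpair]
    push_cast
    ring

theorem det_cos_ne_zero {ι : Type*} [Fintype ι] [DecidableEq ι] {p : ℕ} [hp : Fact p.Prime]
    {u v : ι → ℕ} (hu : Function.Injective u) (hv : Function.Injective v)
    (hu₂ : ∀ i, 2 * u i < p) (hv₂ : ∀ j, 2 * v j < p) :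
    (Matrix.of fun i j ↦ Real.cos (2 * π * (u i * v j : ℕ) / p)).det ≠ 0 := by
  wlog h0 : (∃ i, u i = 0) → ∃ j, v j = 0 generalizing u v
  · push Not at h0
    have hswap := this hv hu hv₂ hu₂ fun ⟨j, hj⟩ ↦ absurd hj (h0.2 j)
    rwa [← det_transpose, show (Matrix.of fun i j ↦ Real.cos (2 * π * (v i * u j : ℕ) / p))ᵀ =
      Matrix.of fun i j ↦ Real.cos (2 * π * (u i * v j : ℕ) / p) by ext; simp [mul_comm]] at hswap
  intro hdet
  obtain ⟨c, hc0, hc⟩ := exists_mulVec_eq_zero_iff.mpr hdet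
  apply hc0
  set s : ι → ZMod p := fun j ↦ v j
  set r : ι → ZMod p := fun i ↦ u i
  set μ := evenDiracSum s fun j ↦ (c j : ℂ)
  have hB : ∀ b ∈ univ.image r ∪ -univ.image r,
      ∑ x, μ x * Complex.exp (2 * π * Complex.I / p) ^ (x * b).val = 0 := by
    intro b hb
    simp only [mem_union, mem_image, mem_univ, true_and, Finset.mem_neg] at hb
    obtain ⟨i, hi⟩ : ∃ i, b = r i ∨ b = -r i := by
      rcases hb with ⟨i, rfl⟩ | ⟨_, ⟨i, rfl⟩, rfl⟩
      exacts [⟨i, .inl rfl⟩, ⟨i, .inr rfl⟩]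
    have hci := congrFun hc i
    simp only [mulVec, dotProduct, Matrix.of_apply, Pi.zero_apply] at hci
    rw [sum_evenDiracSum_mul_exp_pow_val p (u i) v c hi, hci, mul_zero, Complex.ofReal_zero]
  have hcard : #(univ.image s ∪ -univ.image s) ≤ #(univ.image r ∪ -univ.image r) := by
    have hr := ZMod.card_image_natCast_union_neg hu hu₂
    have hs := ZMod.card_image_natCast_union_neg hv hv₂
    split_ifs at hr hs <;> grind
  have hμ := (Complex.isPrimitiveRoot_exp p hp.out.ne_zero).eq_zero_of_card_le_of_fourier_eq_zero
    (fun x hx ↦ evenDiracSum_eq_zero_of_notMem s _ hx) hcard hB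
  have hs : Function.Injective s := ZMod.injective_natCast_comp hv fun j ↦ by linarith [hv₂ j]
  have hneg (j j' : ι) (h : s j = -s j') : j = j' := by
    obtain ⟨h₁, h₂⟩ := ZMod.eq_zero_of_natCast_eq_neg (hv₂ j) (hv₂ j') h
    exact hv (h₁.trans h₂.symm)
  ext j
  have hμj := (evenDiracSum_apply_self hs hneg (fun j ↦ (c j : ℂ)) j).symm.trans
    (congrFun hμ (s j))
  rw [Pi.zero_apply, mul_eq_zero] at hμj
  refine Complex.ofReal_eq_zero.mp (hμj.resolve_right ?_)
  split_ifs <;> norm_num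

noncomputable def dctWeight (r : ℕ) : ℝ := if r = 0 then (√2)⁻¹ else 1

-- The entries of `C_n` as written in the statement, so that its minors unfold to these.
noncomputable def dctEntry (n r s : ℕ) : ℝ :=
  if r = 0 ∧ s = 0 then √(1 / n)
  else if r = 0 ∨ s = 0 then √(2 / n)
  else 2 * Real.cos (2 * π * (r * s : ℕ) / n) / √n

theorem dctWeight_ne_zero (r : ℕ) : dctWeight r ≠ 0 := by
  unfold dctWeight
  split_ifs <;> simp

theorem dctEntry_eq (n r s : ℕ) :
    dctEntry n r s = 2 / √n * (dctWeight r * dctWeight s * Real.cos (2 * π * (r * s : ℕ) / n)) := by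
  rcases eq_or_ne r 0 with rfl | hr <;> rcases eq_or_ne s 0 with rfl | hs <;>
    simp [dctEntry, dctWeight, *]
  · rw [← mul_inv, Real.mul_self_sqrt zero_le_two]
    ring
  · field_simp
    rw [Real.sq_sqrt zero_le_two]
  · field_simp
    rw [Real.sq_sqrt zero_le_two]
  · ring

theorem det_dct_ne_zero {ι : Type*} [Fintype ι] [DecidableEq ι] {p : ℕ} [hp : Fact p.Prime]
    {u v : ι → ℕ} (hu : Function.Injective u) (hv : Function.Injective v)
    (hu₂ : ∀ i, 2 * u i < p) (hv₂ : ∀ j, 2 * v j < p) :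
    (Matrix.of fun i j ↦ dctEntry p (u i) (v j)).det ≠ 0 := by
  have hfac : Matrix.of (fun i j ↦ dctEntry p (u i) (v j)) = (2 / √p) • (diagonal (dctWeight ∘ u) *
      Matrix.of (fun i j ↦ Real.cos (2 * π * (u i * v j : ℕ) / p)) * diagonal (dctWeight ∘ v)) := by
    ext i j
    simp only [Matrix.of_apply, Matrix.smul_apply, mul_diagonal, diagonal_mul, Function.comp_apply,
      dctEntry_eq, smul_eq_mul]
    ring
  have hp₀ : (0 : ℝ) < p := Nat.cast_pos.mpr hp.out.pos
  rw [hfac, det_smul, det_mul, det_mul, det_diagonal, det_diagonal]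
  have hW (w : ι → ℕ) : ∏ i, (dctWeight ∘ w) i ≠ 0 :=
    prod_ne_zero_iff.mpr fun i _ ↦ dctWeight_ne_zero _
  exact mul_ne_zero (by positivity)
    (mul_ne_zero (mul_ne_zero (hW u) (det_cos_ne_zero hu hv hu₂ hv₂)) (hW v))

theorem dctEntry_add_of_dvd_mul {n r m c : ℕ} (hr : r ≠ 0) (h : n ∣ m * c) :
    dctEntry n (r + m) c = dctEntry n r c := by
  obtain ⟨t, ht⟩ := h
  rcases eq_or_ne n 0 with rfl | hn
  · simp [dctEntry]
  have hcos : Real.cos (2 * π * ((r + m) * c : ℕ) / n) = Real.cos (2 * π * (r * c : ℕ) / n) := by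
    rw [← Real.cos_add_nat_mul_two_pi (2 * π * (r * c : ℕ) / n) t]
    congr 1
    rw [add_mul, ht]
    push_cast
    field_simp
  unfold dctEntry
  rw [hcos]
  simp [hr]

theorem exists_dct_minor_det_eq_zero {n : ℕ} (hodd : Odd n) (hnp : ¬n.Prime) (hn1 : n ≠ 1) :
    ∃ ri ci : Fin 2 → Fin ((n + 1) / 2), Function.Injective ri ∧ Function.Injective ci ∧
      (Matrix.of fun i j ↦ dctEntry n (ri i) (ci j)).det = 0 := by
  have hn2 : 2 ≤ n := by obtain ⟨t, rfl⟩ := hodd; omega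
  obtain ⟨a, ⟨b, rfl⟩, ha₂, han⟩ := Nat.exists_dvd_of_not_prime2 hn2 hnp
  obtain ⟨⟨s, hs⟩, ⟨t, ht⟩⟩ := Nat.odd_mul.mp hodd
  have ha₃ : 3 ≤ a := by omega
  have hb₃ : 3 ≤ b := by
    have : b ≠ 1 := by rintro rfl; simp at han
    omega
  have h3a : 3 * a ≤ a * b := by nlinarith
  have h3b : 3 * b ≤ a * b := by nlinarith
  refine ⟨![⟨1, by omega⟩, ⟨1 + b, by omega⟩], ![⟨0, by omega⟩, ⟨a, by omega⟩], ?_, ?_,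
    det_zero_of_row_eq (i := 0) (j := 1) zero_ne_one (funext fun j ↦ ?_)⟩
  · intro i j h
    fin_cases i <;> fin_cases j <;> simp_all [Fin.ext_iff]
  · intro i j h
    fin_cases i <;> fin_cases j <;> simp_all [Fin.ext_iff]
  · fin_cases j <;> simp only [Matrix.cons_val, Matrix.of_apply]
    · exact (dctEntry_add_of_dvd_mul one_ne_zero (dvd_zero _)).symm
    · exact (dctEntry_add_of_dvd_mul one_ne_zero (dvd_of_eq (mul_comm _ _))).symm

theorem det_dct_one_ne_zero {k : ℕ} (ri ci : Fin k → Fin 1) (hri : Function.Injective ri) :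
    (Matrix.of fun i j ↦ dctEntry 1 (ri i) (ci j)).det ≠ 0 := by
  have hk : k ≤ 1 := by simpa using Fintype.card_le_of_injective ri hri
  interval_cases k <;> simp [dctEntry]

theorem dct_nonvanishing_minors_iff (n : ℕ) (hodd : Odd n) :
    (∀ (k : ℕ) (ri ci : Fin k → Fin ((n + 1) / 2)),
      Function.Injective ri → Function.Injective ci →
      (Matrix.of fun i j : Fin k =>
        if (ri i : ℕ) = 0 ∧ (ci j : ℕ) = 0 then Real.sqrt (1 / n)
        else if (ri i : ℕ) = 0 ∨ (ci j : ℕ) = 0 then Real.sqrt (2 / n)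
        else 2 * Real.cos (2 * Real.pi * ((ri i : ℕ) * (ci j : ℕ) : ℕ) / n)
              / Real.sqrt n).det ≠ 0)
    ↔ (n.Prime ∨ n = 1) := by
  constructor
  · intro H
    by_contra! hn
    obtain ⟨ri, ci, hri, hci, hdet⟩ := exists_dct_minor_det_eq_zero hodd hn.1 hn.2
    exact H 2 ri ci hri hci hdet
  · rintro (hp | rfl) k ri ci hri hci
    · have := Fact.mk hp
      exact det_dct_ne_zero (Fin.val_injective.comp hri) (Fin.val_injective.comp hci)
        (fun i ↦ by have := (ri i).isLt; omega) (fun j ↦ by have := (ci j).isLt; omega)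
    · exact det_dct_one_ne_zero ri ci hri
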